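/- arXiv:1309.1445 — 3 statements merged into one kernel-verified Lean document; each statement's English description precedes it below -/
import Mathlib

section
/- Let S be an infinite set of positive integers. Then for every real number C and every natural number d, there exist infinitely many natural numbers n with p_S(n) > C·n^d. In other words, the number of partitions of n into parts from an infinite set S is not bounded above by any polynomial in n. -/
/-!
Pick `m + 1` distinct parts `s₀, …, sₘ ∈ S` and let `P = ∏ sⱼ`. Writing `N P` as
`∑ bⱼ (P / sⱼ) sⱼ` with `∑ bⱼ = N` gives distinct partitions of `N P` into parts from `S`,
and for `N = m t` there are at least `(t + 1)ᵐ` such `b` (choose `b₁, …, bₘ ≤ t` freely).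
Hence `p_S(m t P) ≥ (t + 1)ᵐ`, which for `m = d + 1` outgrows `C (m t P)ᵈ`.
-/

open Finset

section WeightedSums

variable {ι : Type*} [Fintype ι] {s : ι → ℕ}

lemma finite_sum_mul_eq (hs0 : ∀ j, s j ≠ 0) (n : ℕ) :
    Finite {a : ι → ℕ // ∑ j, a j * s j = n} := by
  refine Finite.of_injective (β := ι → Fin (n + 1))
    (fun a j => ⟨a.1 j, Nat.lt_succ_of_le ?_⟩) fun a b h => Subtype.ext <| funext fun j => ?_
  · calc a.1 j ≤ a.1 j * s j := Nat.le_mul_of_pos_right _ (Nat.pos_of_ne_zero (hs0 j))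
      _ ≤ ∑ j, a.1 j * s j := single_le_sum (f := fun j => a.1 j * s j) (by simp) (mem_univ j)
      _ = n := a.2
  · simpa using congrFun h j

lemma sum_sum_replicate (a : ι → ℕ) :
    (∑ j, Multiset.replicate (a j) (s j)).sum = ∑ j, a j * s j := by
  simp [Multiset.sum_sum, Multiset.sum_replicate]

lemma count_sum_replicate [DecidableEq ι] (hs : Function.Injective s) (a : ι → ℕ) (k : ι) :
    (∑ j, Multiset.replicate (a j) (s j)).count (s k) = a k := by
  rw [Multiset.count_sum', sum_eq_single k]
  · simp
  · intro j _ hjk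
    rw [Multiset.count_replicate, if_neg (hs.ne hjk)]
  · simp

lemma card_sum_mul_eq_le_card_partitions {S : Set ℕ} (hs : Function.Injective s)
    (hsS : ∀ j, s j ∈ S) (hs0 : ∀ j, s j ≠ 0) (n : ℕ) :
    Nat.card {a : ι → ℕ // ∑ j, a j * s j = n} ≤
      Nat.card {p : n.Partition // ∀ i ∈ p.parts, i ∈ S} := by
  classical
  refine Nat.card_le_card_of_injective (fun a =>
    ⟨.ofSums n (∑ j, Multiset.replicate (a.1 j) (s j)) ((sum_sum_replicate a.1).trans a.2),
      fun i hi => ?_⟩) fun a b hab => Subtype.ext <| funext fun k => ?_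
  · obtain ⟨j, -, hj⟩ := Multiset.mem_sum.mp (Multiset.mem_of_mem_filter hi)
    exact Multiset.eq_of_mem_replicate hj ▸ hsS j
  · have := congrArg (fun p => p.1.parts.count (s k)) hab
    simpa only [Nat.Partition.count_ofSums_of_ne_zero _ (hs0 k), count_sum_replicate hs] using this

lemma card_sum_eq_le_card_sum_mul_eq {P : ℕ} (hP : 0 < P) (hs0 : ∀ j, s j ≠ 0)
    (hsP : ∀ j, s j ∣ P) (N : ℕ) :
    Nat.card {b : ι → ℕ // ∑ j, b j = N} ≤ Nat.card {a : ι → ℕ // ∑ j, a j * s j = N * P} := by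
  have := finite_sum_mul_eq hs0 (N * P)
  refine Nat.card_le_card_of_injective (fun b => ⟨fun j => b.1 j * (P / s j), ?_⟩)
    fun b c hbc => Subtype.ext <| funext fun j => ?_
  · simp_rw [mul_assoc, Nat.div_mul_cancel (hsP _), ← sum_mul, b.2]
  · have hPs : 0 < P / s j := Nat.div_pos (Nat.le_of_dvd hP (hsP j)) (Nat.pos_of_ne_zero (hs0 j))
    exact Nat.eq_of_mul_eq_mul_right hPs (congrFun (congrArg Subtype.val hbc) j)

end WeightedSums

lemma pow_le_card_sum_eq (m t : ℕ) :
    (t + 1) ^ m ≤ Nat.card {b : Fin (m + 1) → ℕ // ∑ j, b j = m * t} := by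
  have : Finite {b : Fin (m + 1) → ℕ // ∑ j, b j = m * t} := by
    simpa using finite_sum_mul_eq (s := fun _ => 1) (fun _ => one_ne_zero) (m * t)
  have hle (c : Fin m → Fin (t + 1)) : ∑ i, (c i : ℕ) ≤ m * t := by
    simpa using sum_le_sum fun i (_ : i ∈ univ) => Nat.le_of_lt_succ (c i).isLt
  let b (c : Fin m → Fin (t + 1)) : {b : Fin (m + 1) → ℕ // ∑ j, b j = m * t} :=
    ⟨Fin.cons (m * t - ∑ i, (c i : ℕ)) fun i => c i, by
      rw [Fin.sum_cons, Nat.sub_add_cancel (hle c)]⟩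
  have hb : Function.Injective b := fun c c' h => funext fun i => Fin.ext <| by
    simpa [b] using congrFun (congrArg Subtype.val h) i.succ
  simpa using Nat.card_le_card_of_injective b hb

lemma exists_pow_le_card_partitions {S : Set ℕ} (hS : ∀ s ∈ S, 0 < s) (hinf : S.Infinite)
    (m : ℕ) : ∃ P > 0, ∀ t,
      (t + 1) ^ m ≤ Nat.card {p : (m * t * P).Partition // ∀ i ∈ p.parts, i ∈ S} := by
  let e : Fin (m + 1) ↪ S := Fin.valEmbedding.trans hinf.natEmbedding
  let s (j : Fin (m + 1)) : ℕ := e j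
  have hs : Function.Injective s := Subtype.val_injective.comp e.injective
  have hs0 (j) : s j ≠ 0 := (hS _ (e j).2).ne'
  have hP : 0 < ∏ j, s j := prod_pos fun j _ => Nat.pos_of_ne_zero (hs0 j)
  refine ⟨_, hP, fun t => ?_⟩
  calc (t + 1) ^ m ≤ Nat.card {b : Fin (m + 1) → ℕ // ∑ j, b j = m * t} := pow_le_card_sum_eq m t
    _ ≤ _ := card_sum_eq_le_card_sum_mul_eq hP hs0 (fun j => dvd_prod_of_mem s (mem_univ j)) _
    _ ≤ _ := card_sum_mul_eq_le_card_partitions hs (fun j => (e j).2) hs0 _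

lemma mul_pow_lt_succ_pow {A : ℝ} {t : ℕ} (d : ℕ) (hA : A < t + 1) :
    A * t ^ d < (t + 1) ^ (d + 1) := by
  rcases le_or_gt A 0 with hA0 | hA0
  · exact (mul_nonpos_of_nonpos_of_nonneg hA0 (by positivity)).trans_lt (by positivity)
  · calc A * t ^ d ≤ A * (t + 1) ^ d := by gcongr; linarith
      _ < (t + 1) * (t + 1) ^ d := by gcongr
      _ = (t + 1) ^ (d + 1) := (pow_succ' _ _).symm

/-- For an infinite set `S` of positive integers, the number `p_S(n)` of partitions
of `n` into parts from `S` is not bounded above by any polynomial in `n`: for every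
real `C` and every natural `d`, there are infinitely many `n` with
`p_S(n) > C * n^d`. -/
theorem stmt3 (S : Set ℕ) (hS : ∀ s ∈ S, 0 < s) (hinf : S.Infinite)
    (C : ℝ) (d : ℕ) :
    {n : ℕ |
      C * (n : ℝ) ^ d <
        (Nat.card {p : n.Partition // ∀ i ∈ p.parts, i ∈ S} : ℝ)}.Infinite := by
  obtain ⟨P, hP, hcard⟩ := exists_pow_le_card_partitions hS hinf (d + 1)
  set A : ℝ := C * ((d + 1) * P : ℝ) ^ d with hA
  refine Set.infinite_of_forall_exists_gt fun a => ?_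
  obtain ⟨t, ht⟩ := exists_nat_gt (max (a : ℝ) A)
  rw [max_lt_iff, Nat.cast_lt] at ht
  refine ⟨(d + 1) * t * P, ?_, ?_⟩
  · calc C * (((d + 1) * t * P : ℕ) : ℝ) ^ d = A * t ^ d := by
          rw [hA, mul_assoc C, ← mul_pow]; push_cast; ring
      _ < (t + 1) ^ (d + 1) := mul_pow_lt_succ_pow d (by linarith)
      _ ≤ _ := by exact_mod_cast hcard t
  · calc a < t := ht.1
      _ ≤ (d + 1) * t := Nat.le_mul_of_pos_left _ d.succ_pos
      _ ≤ (d + 1) * t * P := Nat.le_mul_of_pos_right _ hP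
end

section
/- Let p(n) denote the ordinary partition function, i.e., the number of partitions of the natural number n. Then for every natural number d, the ratio p(n)/n^d tends to infinity as n → ∞; that is, for every real C there exists N such that p(n) > C·n^d for all n ≥ N. -/
/-!
A vector `a : Fin k → ℕ` with `∑ a i * (i + 2) ≤ n` determines the partition of `n` with `a i`
parts equal to `i + 2`, padded with ones, and is read back from the multiplicities of that
partition. Taking all `a` with `a i < M` gives `p(n) ≥ M ^ k` whenever `k (k + 1) M ≤ n`; for
`k = d + 1` this is `p(n) ≥ ⌊n / c⌋ ^ (d + 1)`, which eventually exceeds `C n ^ d`.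
-/

open Finset

namespace Nat.Partition

def ofCounts {n k : ℕ} (a : Fin k → ℕ) (h : ∑ i, a i * (i + 2) ≤ n) : n.Partition :=
  ofSums n (∑ i, Multiset.replicate (a i) ((i : ℕ) + 2) +
      Multiset.replicate (n - ∑ i, a i * (i + 2)) 1) <| by
    simp only [Multiset.sum_add, Multiset.sum_sum, Multiset.sum_replicate, smul_eq_mul, mul_one]
    omega

theorem count_ofCounts {n k : ℕ} (a : Fin k → ℕ) (h : ∑ i, a i * (i + 2) ≤ n) (j : Fin k) :
    (ofCounts a h).parts.count ((j : ℕ) + 2) = a j := by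
  rw [ofCounts, count_ofSums_of_ne_zero _ (by omega), Multiset.count_add, Multiset.count_sum']
  simp [Multiset.count_replicate, Fin.val_inj]

theorem ofCounts_injective {n k : ℕ} (a b : Fin k → ℕ) (ha : ∑ i, a i * (i + 2) ≤ n)
    (hb : ∑ i, b i * (i + 2) ≤ n) (hab : ofCounts a ha = ofCounts b hb) : a = b := by
  ext j
  rw [← count_ofCounts a ha j, hab, count_ofCounts]

theorem pow_le_card {n k M : ℕ} (hM : k * (k + 1) * M ≤ n) : M ^ k ≤ Nat.card n.Partition := by
  have hsum (a : Fin k → Fin M) : ∑ i, (a i : ℕ) * (i + 2) ≤ n :=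
    calc ∑ i, (a i : ℕ) * (i + 2) ≤ ∑ _ : Fin k, M * (k + 1) := by
          refine sum_le_sum fun i _ => Nat.mul_le_mul (a i).is_lt.le (by omega)
      _ ≤ n := by rw [sum_const, Finset.card_univ, Fintype.card_fin, smul_eq_mul]; linarith
  have hinj : Function.Injective fun a : Fin k → Fin M => ofCounts (fun i => (a i : ℕ)) (hsum a) :=
    fun a b hab => funext fun i => Fin.ext (congrFun (ofCounts_injective _ _ _ _ hab) i)
  simpa [Nat.card_eq_fintype_card] using Fintype.card_le_of_injective _ hinj

end Nat.Partition

theorem exists_mul_pow_lt_of_pow_div_le {f : ℕ → ℕ} {c d : ℕ} (hc : 0 < c)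
    (hf : ∀ n, (n / c) ^ (d + 1) ≤ f n) (C : ℝ) :
    ∃ N : ℕ, ∀ n : ℕ, N ≤ n → C * (n : ℝ) ^ d < f n := by
  set C' := max C 0 * (2 * c : ℝ) ^ d
  refine ⟨c * (⌈C'⌉₊ + 1), fun n hn => ?_⟩
  set M := n / c
  have hM : ⌈C'⌉₊ + 1 ≤ M := (Nat.le_div_iff_mul_le hc).2 (by linarith)
  have hnM : (n : ℝ) ≤ 2 * c * M := by
    have hlt : n < c * (M + 1) := Nat.lt_mul_div_succ n hc
    have : n ≤ 2 * c * M := by nlinarith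
    exact_mod_cast this
  have hC'M : C' < M := (Nat.le_ceil C').trans_lt (by exact_mod_cast hM)
  have hMpos : 0 < M := by omega
  calc C * (n : ℝ) ^ d ≤ max C 0 * (2 * c * M) ^ d := by
        gcongr
        exact le_max_left C 0
    _ = C' * (M : ℝ) ^ d := by rw [mul_pow]; ring
    _ < M * (M : ℝ) ^ d := by gcongr
    _ = ((M ^ (d + 1) : ℕ) : ℝ) := by push_cast; ring
    _ ≤ f n := by exact_mod_cast hf n

/-- The partition function `p(n) = Nat.card (n.Partition)` grows superpolynomially:
for every natural `d` and every real `C` there exists `N` such that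
`p(n) > C * n^d` for all `n ≥ N`, i.e. `p(n)/n^d → ∞`. -/
theorem stmt4 (d : ℕ) :
    ∀ C : ℝ, ∃ N : ℕ, ∀ n : ℕ, N ≤ n →
      C * (n : ℝ) ^ d < (Nat.card (n.Partition) : ℝ) :=
  exists_mul_pow_lt_of_pow_div_le (by positivity : 0 < (d + 1) * (d + 2))
    fun n => Nat.Partition.pow_le_card (Nat.mul_div_le n _)
end

section
/- Let S be an infinite set of positive integers. Let J be a finite index set, and for each j ∈ J let σ_j be a finite type, let w_j : σ_j → ℕ be a weight function with w_j(i) ≥ 1 for all i, and let c_j ∈ ℕ be a shift. For m ∈ ℕ let N_j(m) denote the number of finitely supported functions d : σ_j →₀ ℕ with Σ_i d(i)·w_j(i) = m. Then there exist infinitely many natural numbers n with n ≥ c_j for all j ∈ J such that p_S(n) > Σ_{j ∈ J} N_j(n − c_j). -/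
/-!
Every exponent of a monomial of weighted degree `m` is at most `m` (weights are `≥ 1`), so
`N_j(m) ≤ (m + 1) ^ |σ_j|` and the right-hand side grows polynomially, with degree at most
`D = max_j |σ_j|`. The partition count grows faster than any polynomial: take `D + 1` parts
`F ⊆ S` and one more part `T ∈ S \ F`. For `b : F → {0, …, B}`, taking `T * b x` copies of each
`x ∈ F` and filling up with copies of `T` gives a partition of `T * B * ∑ F` with parts in `S`,
and `b` is recovered from the multiplicities. So `p_S(a B) ≥ (B + 1) ^ (D + 1)` for `a = T * ∑ F`,
which eventually beats `|J| (a B + 1) ^ D`.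
-/

open Finset

noncomputable def restrictedPartitionCount (S : Set ℕ) (n : ℕ) : ℕ :=
  Nat.card {p : n.Partition // ∀ i ∈ p.parts, i ∈ S}

theorem card_weight_eq_le_pow {σ : Type*} [Fintype σ] (w : σ → ℕ) (hw : ∀ i, w i ≠ 0) (m : ℕ) :
    Nat.card {d : σ →₀ ℕ // Finsupp.weight w d = m} ≤ (m + 1) ^ Fintype.card σ := by
  classical
  let toFun (d : {d : σ →₀ ℕ // Finsupp.weight w d = m}) : σ → Fin (m + 1) :=
    fun i => ⟨d.1 i, Nat.lt_succ_of_le ((Finsupp.le_weight w (hw i) d.1).trans_eq d.2)⟩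
  have h_inj : Function.Injective toFun := fun d d' h =>
    Subtype.ext <| Finsupp.ext fun i => congrArg Fin.val (congrFun h i)
  simpa [Nat.card_eq_fintype_card, Fintype.card_fun] using
    Nat.card_le_card_of_injective toFun h_inj

theorem pow_card_le_restrictedPartitionCount {S : Set ℕ} (hS : ∀ s ∈ S, 0 < s) {F : Finset ℕ}
    (hF : ↑F ⊆ S) {T : ℕ} (hT : T ∈ S) (hTF : T ∉ F) (B : ℕ) :
    (B + 1) ^ #F ≤ restrictedPartitionCount S (T * (B * ∑ x ∈ F, x)) := by
  classical
  let parts (b : F → Fin (B + 1)) : Multiset ℕ :=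
    ∑ x : F, .replicate (T * b x) (x : ℕ) +
      .replicate (B * ∑ x ∈ F, x - ∑ x : F, (b x : ℕ) * x) T
  have mem_parts {b x} (hx : x ∈ parts b) : x ∈ S := by
    rcases Multiset.mem_add.1 hx with hx | hx
    · obtain ⟨y, -, hy⟩ := Multiset.mem_sum.1 hx
      exact Multiset.eq_of_mem_replicate hy ▸ hF y.2
    · exact Multiset.eq_of_mem_replicate hx ▸ hT
  have sum_parts (b) : (parts b).sum = T * (B * ∑ x ∈ F, x) := by
    have hle : ∑ x : F, (b x : ℕ) * x ≤ B * ∑ x ∈ F, x := by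
      rw [Finset.mul_sum, ← Finset.sum_coe_sort F]
      exact Finset.sum_le_sum fun x _ => Nat.mul_le_mul_right _ (Nat.le_of_lt_succ (b x).2)
    have sum_sum (f : F → Multiset ℕ) : (∑ x, f x).sum = ∑ x, (f x).sum :=
      map_sum Multiset.sumAddMonoidHom f univ
    calc (parts b).sum
        = T * ∑ x : F, (b x : ℕ) * x + (B * ∑ x ∈ F, x - ∑ x : F, (b x : ℕ) * x) * T := by
          simp only [parts, Multiset.sum_add, sum_sum, Multiset.sum_replicate, smul_eq_mul,
            Finset.mul_sum, mul_assoc]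
      _ = T * (B * ∑ x ∈ F, x) := by rw [mul_comm _ T, ← mul_add, Nat.add_sub_cancel' hle]
  have count_parts (b) (x : F) : (parts b).count (x : ℕ) = T * b x := by
    have hxT : T ≠ x := (ne_of_mem_of_not_mem x.2 hTF).symm
    simp [parts, Multiset.count_sum', Multiset.count_replicate, hxT]
  let toPartition (b : F → Fin (B + 1)) :
      {p : (T * (B * ∑ x ∈ F, x)).Partition // ∀ i ∈ p.parts, i ∈ S} :=
    ⟨⟨parts b, fun hx => hS _ (mem_parts hx), sum_parts b⟩, fun _ => mem_parts⟩
  have h_inj : Function.Injective toPartition := fun b b' h => funext fun x => Fin.ext <|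
    Nat.eq_of_mul_eq_mul_left (hS T hT) <| by
      rw [← count_parts, ← count_parts]; exact congrArg (·.1.parts.count (x : ℕ)) h
  simpa [restrictedPartitionCount, Fintype.card_fun] using
    Nat.card_le_card_of_injective toPartition h_inj

theorem exists_pos_forall_pow_le_restrictedPartitionCount {S : Set ℕ} (hS : ∀ s ∈ S, 0 < s)
    (hinf : S.Infinite) {k : ℕ} (hk : k ≠ 0) :
    ∃ a, 0 < a ∧ ∀ B, (B + 1) ^ k ≤ restrictedPartitionCount S (a * B) := by
  obtain ⟨F, hFS, rfl⟩ := hinf.exists_subset_card_eq k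
  obtain ⟨T, hT, hTF⟩ := hinf.exists_notMem_finset F
  refine ⟨T * ∑ x ∈ F, x, Nat.mul_pos (hS T hT) ?_, fun B => ?_⟩
  · exact Finset.sum_pos (fun x hx => hS x (hFS hx)) (Finset.card_ne_zero.1 hk)
  · have := pow_card_le_restrictedPartitionCount hS hFS hT hTF B
    rwa [mul_left_comm, mul_comm B] at this

theorem sum_card_weight_eq_le {J : Type*} [Fintype J] {σ : J → Type*} [∀ j, Fintype (σ j)]
    (w : (j : J) → σ j → ℕ) (hw : ∀ j i, w j i ≠ 0) (c : J → ℕ) {D : ℕ}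
    (hD : ∀ j, Fintype.card (σ j) ≤ D) (n : ℕ) :
    ∑ j, Nat.card {d : σ j →₀ ℕ // Finsupp.weight (w j) d = n - c j} ≤
      Fintype.card J * (n + 1) ^ D := by
  calc ∑ j, Nat.card {d : σ j →₀ ℕ // Finsupp.weight (w j) d = n - c j}
      ≤ ∑ j, (n - c j + 1) ^ Fintype.card (σ j) :=
        Finset.sum_le_sum fun j _ => card_weight_eq_le_pow (w j) (hw j) _
    _ ≤ ∑ _j : J, (n + 1) ^ D :=
        Finset.sum_le_sum fun j _ =>
          (Nat.pow_le_pow_left (by omega) _).trans (Nat.pow_le_pow_right n.succ_pos (hD j))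
    _ = Fintype.card J * (n + 1) ^ D := by simp

/-- Let `S` be an infinite set of positive integers, `J` a finite index set, and for
each `j ∈ J` let `σ j` be a finite type with weight function `w j : σ j → ℕ` taking
values `≥ 1`, and let `c j ∈ ℕ` be a shift.  Writing `N j m` for the number of
finitely supported `d : σ j →₀ ℕ` with `∑ i, d i * w j i = m`, there exist
infinitely many `n` with `n ≥ c j` for all `j` and
`p_S(n) > ∑ j, N j (n - c j)`. -/
theorem stmt5 (S : Set ℕ) (hS : ∀ s ∈ S, 0 < s) (hinf : S.Infinite)
    (J : Type*) [Fintype J] (σ : J → Type*) [∀ j, Fintype (σ j)]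
    (w : (j : J) → σ j → ℕ) (hw : ∀ j i, 1 ≤ w j i) (c : J → ℕ) :
    {n : ℕ | (∀ j, c j ≤ n) ∧
      ∑ j : J, Nat.card {d : σ j →₀ ℕ // Finsupp.weight (w j) d = n - c j} <
        Nat.card {p : n.Partition // ∀ i ∈ p.parts, i ∈ S}}.Infinite := by
  set D := univ.sup fun j => Fintype.card (σ j)
  obtain ⟨a, ha, hpart⟩ :=
    exists_pos_forall_pow_le_restrictedPartitionCount hS hinf D.succ_ne_zero
  refine Set.infinite_of_forall_exists_gt fun N => ?_
  set B := N + Fintype.card J * a ^ D + univ.sup c + 1 with hB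
  have hBa : B ≤ a * B := Nat.le_mul_of_pos_left B ha
  refine ⟨a * B, ⟨fun j => (le_sup (f := c) (mem_univ j)).trans (by omega), ?_⟩, by omega⟩
  calc _ ≤ Fintype.card J * (a * B + 1) ^ D :=
        sum_card_weight_eq_le w (fun j i => Nat.one_le_iff_ne_zero.1 (hw j i)) c
          (fun j => le_sup (f := fun j => Fintype.card (σ j)) (mem_univ j)) _
    _ ≤ Fintype.card J * (a * (B + 1)) ^ D := by gcongr; nlinarith
    _ = Fintype.card J * a ^ D * (B + 1) ^ D := by rw [mul_pow, mul_assoc]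
    _ < (B + 1) * (B + 1) ^ D := by gcongr; omega
    _ = (B + 1) ^ (D + 1) := (pow_succ' _ _).symm
    _ ≤ _ := hpart B
end
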